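/- Let F : ℝ^T × ℝ → [0,1] be measurable such that for each y ∈ ℝ^T, r ↦ F(y, r) is a cdf, and suppose there is φ : ℝ₊ → ℝ₊ with ∫_0^∞ φ(r) dr < ∞ such that 1 − F(y, r) ≤ φ(r) and F(y, −r) ≤ φ(r) for all y and r > 0. Define G_x(r) = ∫ F(x+z, r) p_σ(z) dz with p_σ the N(0, σ²I_T) density. Then for all x, δ ∈ ℝ^T, ∫_{-∞}^∞ |G_x(r) − G_{x+δ}(r)| dr ≤ (‖δ‖₂/σ) (∫_0^∞ φ(r) dr)(∫_{ℝ^T} ‖z‖₂ p(z) dz), where p is the standard Gaussian density on ℝ^T. -/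

import Mathlib

/-!
For `r > 0` all values `F y r` lie in `[1 - φ r, 1]`, for `r < 0` in `[0, φ |r|]`. As `p_σ` and
its translate `p_σ (· - δ)` have the same mass, the difference
`G_x(r) - G_{x+δ}(r) = ∫ F (x + z, r) (p_σ z - p_σ (z - δ)) dz` only sees the oscillation of
`F (·, r)` and is at most `φ |r| / 2 · ‖p_σ - p_σ (· - δ)‖₁`.
Integrating the gradient of the Gaussian along segments bounds this L¹ distance by
`‖δ‖ ∫ ‖∇p_σ‖ = (‖δ‖ / σ) ∫ ‖z‖ p(z) dz`, and `∫ φ |r| dr = 2 ∫_0^∞ φ`.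
-/

open MeasureTheory

/-- Density of `N(0, σ²I_T)` on `ℝ^T`. -/
noncomputable def gpdfs (T : ℕ) (σ : ℝ) (w : EuclideanSpace ℝ (Fin T)) : ℝ :=
  (2 * Real.pi * σ ^ 2) ^ (-(T : ℝ) / 2) * Real.exp (-‖w‖ ^ 2 / (2 * σ ^ 2))

/-- Density of the standard Gaussian `N(0, I_T)` on `ℝ^T`. -/
noncomputable def gpdf (T : ℕ) (z : EuclideanSpace ℝ (Fin T)) : ℝ :=
  (2 * Real.pi) ^ (-(T : ℝ) / 2) * Real.exp (-‖z‖ ^ 2 / 2)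

open Set
open scoped RealInnerProductSpace

section Oscillation

variable {α : Type*} [MeasurableSpace α] {μ : Measure α}

/-- Since `∫ A = ∫ B`, the weight `u` may be recentred at the midpoint of `[a, b]`. -/
theorem abs_integral_mul_sub_integral_mul_le {A B u : α → ℝ} {a b : ℝ}
    (hA : Integrable A μ) (hB : Integrable B μ) (hAB : ∫ z, A z ∂μ = ∫ z, B z ∂μ)
    (hu : AEStronglyMeasurable u μ) (hab : ∀ z, u z ∈ Icc a b) :
    |∫ z, u z * A z ∂μ - ∫ z, u z * B z ∂μ| ≤ (b - a) / 2 * ∫ z, |A z - B z| ∂μ := by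
  have hu_bdd : ∀ z, ‖u z‖ ≤ max |a| |b| := fun z =>
    abs_le_max_abs_abs (hab z).1 (hab z).2
  have huA := hA.bdd_mul hu (ae_of_all _ hu_bdd)
  have huB := hB.bdd_mul hu (ae_of_all _ hu_bdd)
  have hrecentre : ∫ z, u z * A z ∂μ - ∫ z, u z * B z ∂μ =
      ∫ z, (u z - (a + b) / 2) * (A z - B z) ∂μ := by
    have hexpand : ∀ z, (u z - (a + b) / 2) * (A z - B z) =
        (u z * A z - u z * B z) - (a + b) / 2 * (A z - B z) := fun z => by ring
    have hdiff : Integrable (fun z => u z * A z - u z * B z) μ := huA.sub huB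
    have hmid : Integrable (fun z => (a + b) / 2 * (A z - B z)) μ := (hA.sub hB).const_mul _
    simp_rw [hexpand]
    rw [integral_sub hdiff hmid, integral_sub huA huB, integral_const_mul, integral_sub hA hB,
      hAB, sub_self, mul_zero, sub_zero]
  rw [hrecentre, ← integral_const_mul]
  refine (abs_integral_le_integral_abs).trans
    (integral_mono_of_nonneg (ae_of_all _ fun z => abs_nonneg _)
      ((hA.sub hB).abs.const_mul _) (ae_of_all _ fun z => ?_))
  dsimp only
  rw [abs_mul]
  gcongr
  obtain ⟨h₁, h₂⟩ := hab z
  rw [abs_le]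
  constructor <;> linarith

end Oscillation

section Translation

variable {E : Type*} [AddCommGroup E] [MeasurableSpace E] [MeasurableAdd E] {μ : Measure E}
  [μ.IsAddRightInvariant]

theorem abs_integral_comp_add_mul_sub_le {p u : E → ℝ} {a b : ℝ} (hp : Integrable p μ)
    (hu : Measurable u) (hab : ∀ y, u y ∈ Icc a b) (x δ : E) :
    |∫ z, u (x + z) * p z ∂μ - ∫ z, u (x + δ + z) * p z ∂μ| ≤
      (b - a) / 2 * ∫ z, |p z - p (z - δ)| ∂μ := by
  have hshift : ∫ z, u (x + δ + z) * p z ∂μ = ∫ z, u (x + z) * p (z - δ) ∂μ := by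
    rw [← integral_sub_right_eq_self (fun z => u (x + δ + z) * p z) δ]
    simp_rw [add_add_sub_cancel]
  rw [hshift]
  exact abs_integral_mul_sub_integral_mul_le hp (hp.comp_sub_right δ)
    (integral_sub_right_eq_self p δ).symm (hu.comp (measurable_const_add x)).aestronglyMeasurable
    fun z => hab (x + z)

end Translation

section Derivative

variable {E : Type*} [NormedAddCommGroup E] [NormedSpace ℝ E]

theorem abs_sub_comp_sub_le_integral {f : E → ℝ} {f' : E → E →L[ℝ] ℝ}
    (hf : ∀ z, HasFDerivAt f (f' z) z) (hf' : Continuous f') (z δ : E) :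
    |f z - f (z - δ)| ≤ ∫ t in (0 : ℝ)..1, ‖δ‖ * ‖f' (z - t • δ)‖ := by
  have hline : Continuous fun t : ℝ => z - t • δ := by fun_prop
  have hftc : ∫ t in (0 : ℝ)..1, f' (z - t • δ) (-δ) = f (z - δ) - f z := by
    have hderiv : ∀ t : ℝ, HasDerivAt (fun s : ℝ => f (z - s • δ)) (f' (z - t • δ) (-δ)) t :=
      fun t => by
        have h := (hf _).comp_hasDerivAt t (((hasDerivAt_id t).smul_const δ).const_sub z)
        simp only [id, one_smul, map_neg] at h
        rwa [map_neg]
    simpa using intervalIntegral.integral_eq_sub_of_hasDerivAt (fun t _ => hderiv t)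
      (((hf'.comp hline).clm_apply continuous_const).intervalIntegrable 0 1)
  rw [abs_sub_comm, ← hftc, ← Real.norm_eq_abs]
  refine intervalIntegral.norm_integral_le_of_norm_le zero_le_one
    (ae_of_all _ fun t _ => ?_)
    ((continuous_const.mul (hf'.comp hline).norm).intervalIntegrable _ _)
  rw [mul_comm, ← norm_neg δ]
  exact (f' _).le_opNorm _

variable [MeasurableSpace E] [BorelSpace E] {μ : Measure E} [SFinite μ]
  [μ.IsAddRightInvariant]

theorem integral_abs_sub_comp_sub_le {f : E → ℝ} {f' : E → E →L[ℝ] ℝ}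
    (hf : ∀ z, HasFDerivAt f (f' z) z) (hf' : Continuous f') (hint : Integrable f' μ) (δ : E) :
    ∫ z, |f z - f (z - δ)| ∂μ ≤ ‖δ‖ * ∫ z, ‖f' z‖ ∂μ := by
  set ν : Measure ℝ := volume.restrict (Ioc 0 1)
  set g : E → ℝ → ℝ := fun z t => ‖δ‖ * ‖f' (z - t • δ)‖
  have hslice : ∀ t, ∫ z, g z t ∂μ = ‖δ‖ * ∫ z, ‖f' z‖ ∂μ := fun t => by
    rw [integral_const_mul, integral_sub_right_eq_self (fun z => ‖f' z‖)]
  have hg : Integrable (Function.uncurry g) (μ.prod ν) := by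
    rw [integrable_prod_iff' (by fun_prop : Continuous (Function.uncurry g)).aestronglyMeasurable]
    refine ⟨ae_of_all _ fun t => ((hint.comp_sub_right (t • δ)).norm.const_mul _), ?_⟩
    simp_rw [Function.uncurry_apply_pair, Real.norm_of_nonneg (by positivity : (0 : ℝ) ≤ g _ _),
      hslice]
    exact integrable_const _
  calc ∫ z, |f z - f (z - δ)| ∂μ ≤ ∫ z, ∫ t, g z t ∂ν ∂μ :=
        integral_mono_of_nonneg (ae_of_all _ fun z => abs_nonneg _) hg.integral_prod_left
          (ae_of_all _ fun z => by
            simpa [intervalIntegral.integral_of_le zero_le_one, g] using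
              abs_sub_comp_sub_le_integral hf hf' z δ)
    _ = ∫ t, ∫ z, g z t ∂μ ∂ν := integral_integral_swap hg
    _ = ‖δ‖ * ∫ z, ‖f' z‖ ∂μ := by simp [hslice, ν]

end Derivative

section Gaussian

theorem integrable_exp_neg_mul_sq_norm {V : Type*} [NormedAddCommGroup V] [InnerProductSpace ℝ V]
    [FiniteDimensional ℝ V] [MeasurableSpace V] [BorelSpace V] {b : ℝ} (hb : 0 < b) :
    Integrable fun v : V => Real.exp (-b * ‖v‖ ^ 2) :=
  Integrable.of_integral_ne_zero <| by
    rw [GaussianFourier.integral_rexp_neg_mul_sq_norm hb]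
    positivity

variable {T : ℕ}

theorem gpdf_nonneg (z : EuclideanSpace ℝ (Fin T)) : 0 ≤ gpdf T z := by
  unfold gpdf
  positivity

theorem integrable_gpdf : Integrable (gpdf T) := by
  refine ((integrable_exp_neg_mul_sq_norm (V := EuclideanSpace ℝ (Fin T)) one_half_pos).const_mul
    ((2 * Real.pi) ^ (-(T : ℝ) / 2))).congr (ae_of_all _ fun z => ?_)
  simp only [gpdf]
  ring_nf

-- `t e^{-t²/2} ≤ e^{t - t²/2} ≤ e^{1 - t²/4}`, the last step being `(t - 2)² ≥ 0`.
theorem norm_mul_gpdf_le (z : EuclideanSpace ℝ (Fin T)) :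
    ‖z‖ * gpdf T z ≤
      Real.exp 1 * ((2 * Real.pi) ^ (-(T : ℝ) / 2) * Real.exp (-(1 / 4) * ‖z‖ ^ 2)) := by
  have hexp : ‖z‖ * Real.exp (-‖z‖ ^ 2 / 2) ≤ Real.exp 1 * Real.exp (-(1 / 4) * ‖z‖ ^ 2) := by
    calc ‖z‖ * Real.exp (-‖z‖ ^ 2 / 2) ≤ Real.exp ‖z‖ * Real.exp (-‖z‖ ^ 2 / 2) := by
          refine mul_le_mul_of_nonneg_right ?_ (Real.exp_pos _).le
          linarith [Real.add_one_le_exp ‖z‖]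
      _ ≤ Real.exp 1 * Real.exp (-(1 / 4) * ‖z‖ ^ 2) := by
          rw [← Real.exp_add, ← Real.exp_add, Real.exp_le_exp]
          nlinarith [sq_nonneg (‖z‖ - 2)]
  unfold gpdf
  calc ‖z‖ * ((2 * Real.pi) ^ (-(T : ℝ) / 2) * Real.exp (-‖z‖ ^ 2 / 2))
      = (2 * Real.pi) ^ (-(T : ℝ) / 2) * (‖z‖ * Real.exp (-‖z‖ ^ 2 / 2)) := by ring
    _ ≤ (2 * Real.pi) ^ (-(T : ℝ) / 2) * (Real.exp 1 * Real.exp (-(1 / 4) * ‖z‖ ^ 2)) := by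
      gcongr
    _ = _ := by ring

theorem integrable_norm_mul_gpdf : Integrable fun z : EuclideanSpace ℝ (Fin T) => ‖z‖ * gpdf T z :=
  (((integrable_exp_neg_mul_sq_norm (by norm_num : (0 : ℝ) < 1 / 4)).const_mul _).const_mul _).mono'
    (by unfold gpdf; fun_prop) (ae_of_all _ fun z => by
      rw [Real.norm_of_nonneg (mul_nonneg (norm_nonneg z) (gpdf_nonneg z))]
      exact norm_mul_gpdf_le z)

theorem hasFDerivAt_gpdf (z : EuclideanSpace ℝ (Fin T)) :
    HasFDerivAt (gpdf T) (-gpdf T z • innerSL ℝ z) z := by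
  have h := (((hasFDerivAt_id z).norm_sq.const_mul (-1 / 2)).exp).const_mul
    ((2 * Real.pi) ^ (-(T : ℝ) / 2))
  have hgpdf : gpdf T =
      fun y => (2 * Real.pi) ^ (-(T : ℝ) / 2) * Real.exp (-1 / 2 * ‖id y‖ ^ 2) := by
    ext y
    simp only [gpdf, id]
    ring_nf
  rw [hgpdf]
  refine h.congr_fderiv ?_
  ext v
  simp
  ring

theorem gpdfs_eq_gpdf_inv_smul {σ : ℝ} (hσ : 0 < σ) (z : EuclideanSpace ℝ (Fin T)) :
    gpdfs T σ z = (σ ^ T)⁻¹ * gpdf T (σ⁻¹ • z) := by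
  have hscale : (2 * Real.pi * σ ^ 2) ^ (-(T : ℝ) / 2) =
      (σ ^ T)⁻¹ * (2 * Real.pi) ^ (-(T : ℝ) / 2) := by
    rw [Real.mul_rpow (by positivity) (by positivity), ← Real.rpow_natCast σ,
      ← Real.rpow_natCast σ T, ← Real.rpow_mul hσ.le, ← Real.rpow_neg hσ.le]
    ring_nf
  unfold gpdfs gpdf
  rw [hscale, norm_smul, Real.norm_of_nonneg (inv_nonneg.2 hσ.le)]
  field_simp

theorem integral_abs_gpdf_sub_le (δ : EuclideanSpace ℝ (Fin T)) :
    ∫ z, |gpdf T z - gpdf T (z - δ)| ≤ ‖δ‖ * ∫ z, ‖z‖ * gpdf T z := by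
  have hnorm : ∀ z, ‖-gpdf T z • innerSL ℝ z‖ = ‖z‖ * gpdf T z := fun z => by
    rw [norm_smul, innerSL_apply_norm, norm_neg, Real.norm_of_nonneg (gpdf_nonneg z), mul_comm]
  have hcont : Continuous fun z : EuclideanSpace ℝ (Fin T) => -gpdf T z • innerSL ℝ z := by
    unfold gpdf
    fun_prop
  have hint : Integrable fun z : EuclideanSpace ℝ (Fin T) => -gpdf T z • innerSL ℝ z :=
    integrable_norm_mul_gpdf.mono' hcont.aestronglyMeasurable (ae_of_all _ fun z => (hnorm z).le)
  simpa only [hnorm] using integral_abs_sub_comp_sub_le hasFDerivAt_gpdf hcont hint δ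

theorem integral_abs_gpdfs_sub_le {σ : ℝ} (hσ : 0 < σ) (δ : EuclideanSpace ℝ (Fin T)) :
    ∫ z, |gpdfs T σ z - gpdfs T σ (z - δ)| ≤ ‖δ‖ / σ * ∫ z, ‖z‖ * gpdf T z := by
  have hscale : ∫ z, |gpdfs T σ z - gpdfs T σ (z - δ)| =
      ∫ w, |gpdf T w - gpdf T (w - σ⁻¹ • δ)| := by
    simp_rw [gpdfs_eq_gpdf_inv_smul hσ, smul_sub, ← mul_sub, abs_mul,
      abs_of_pos (inv_pos.2 (pow_pos hσ T)), integral_const_mul]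
    rw [Measure.integral_comp_inv_smul_of_nonneg volume
        (fun w => |gpdf T w - gpdf T (w - σ⁻¹ • δ)|) hσ.le, finrank_euclideanSpace_fin, smul_eq_mul,
      inv_mul_cancel_left₀ (pow_pos hσ T).ne']
  rw [hscale]
  refine (integral_abs_gpdf_sub_le _).trans_eq ?_
  rw [norm_smul, Real.norm_of_nonneg (inv_nonneg.2 hσ.le), inv_mul_eq_div]

theorem integrable_gpdfs {σ : ℝ} (hσ : 0 < σ) : Integrable (gpdfs T σ) := by
  simp_rw [funext (gpdfs_eq_gpdf_inv_smul hσ)]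
  exact (integrable_gpdf.comp_smul (inv_ne_zero hσ.ne')).const_mul _

end Gaussian

theorem integrable_comp_abs_of_integrableOn_Ioi {E : Type*} [NormedAddCommGroup E] {f : ℝ → E}
    (hf : IntegrableOn f (Ioi 0)) :
    Integrable fun x => f |x| := by
  have hg : Integrable ((Ioi 0).indicator f) := hf.integrable_indicator measurableSet_Ioi
  refine (hg.add hg.comp_neg).congr ?_
  filter_upwards [compl_mem_ae_iff.2 (measure_singleton (0 : ℝ))] with x hx
  rcases (mem_compl_singleton_iff.1 hx).lt_or_gt with hneg | hpos
  · simp [hneg, abs_of_neg hneg, lt_asymm hneg]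
  · simp [hpos, abs_of_pos hpos, lt_asymm hpos]

theorem stmt_13_general (T : ℕ) (σ : ℝ) (hσ : 0 < σ)
    (F : EuclideanSpace ℝ (Fin T) → ℝ → ℝ)
    (hmeas : Measurable (Function.uncurry F))
    (hrange : ∀ y r, F y r ∈ Set.Icc (0:ℝ) 1)
    (φ : ℝ → ℝ) (hφint : IntegrableOn φ (Set.Ioi 0))
    (htail : ∀ y, ∀ r : ℝ, 0 < r → 1 - F y r ≤ φ r ∧ F y (-r) ≤ φ r)
    (x δ : EuclideanSpace ℝ (Fin T)) :
    ∫ r : ℝ, |(∫ z, F (x + z) r * gpdfs T σ z) - ∫ z, F (x + δ + z) r * gpdfs T σ z| ≤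
      (‖δ‖ / σ) * (∫ r in Set.Ioi (0:ℝ), φ r) * ∫ z, ‖z‖ * gpdf T z := by
  set I := ∫ z, |gpdfs T σ z - gpdfs T σ (z - δ)|
  have hband : ∀ r ≠ 0, ∃ a, ∀ y, F y r ∈ Icc a (a + φ |r|) := by
    intro r hr
    rcases hr.lt_or_gt with hneg | hpos
    · refine ⟨0, fun y => ⟨(hrange y r).1, ?_⟩⟩
      simpa [abs_of_neg hneg] using (htail y (-r) (neg_pos.2 hneg)).2
    · refine ⟨1 - φ r, fun y => ⟨by linarith [(htail y r hpos).1], ?_⟩⟩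
      rw [abs_of_pos hpos]
      linarith [(hrange y r).2]
  have hpointwise : ∀ r ≠ 0, |(∫ z, F (x + z) r * gpdfs T σ z) -
      ∫ z, F (x + δ + z) r * gpdfs T σ z| ≤ φ |r| / 2 * I := by
    intro r hr
    obtain ⟨a, ha⟩ := hband r hr
    simpa using abs_integral_comp_add_mul_sub_le (integrable_gpdfs hσ) hmeas.of_uncurry_right ha x δ
  have hφ_nonneg : ∀ r ∈ Ioi (0 : ℝ), 0 ≤ φ r := fun r hr =>
    (sub_nonneg.2 (hrange 0 r).2).trans (htail 0 r hr).1
  calc _ ≤ ∫ r, φ |r| / 2 * I :=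
        integral_mono_of_nonneg (ae_of_all _ fun r => abs_nonneg _)
          (((integrable_comp_abs_of_integrableOn_Ioi hφint).div_const 2).mul_const I)
          (by filter_upwards [compl_mem_ae_iff.2 (measure_singleton (0 : ℝ))] with r hr
              exact hpointwise r hr)
    _ = I * ∫ r in Ioi 0, φ r := by
        rw [integral_mul_const, integral_div, integral_comp_abs]
        ring
    _ ≤ (‖δ‖ / σ * ∫ z, ‖z‖ * gpdf T z) * ∫ r in Ioi 0, φ r :=
        mul_le_mul_of_nonneg_right (integral_abs_gpdfs_sub_le hσ δ)
          (setIntegral_nonneg measurableSet_Ioi hφ_nonneg)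
    _ = _ := by ring

/-- for a measurable family of cdfs `F(y, ·)` with integrable tail envelope `φ`,
the Gaussian-smoothed cdfs `G_x(r) = ∫ F(x+z, r) p_σ(z) dz` satisfy
`∫ |G_x(r) − G_{x+δ}(r)| dr ≤ (‖δ‖₂/σ)(∫_0^∞ φ)(∫ ‖z‖ p(z) dz)`. -/
theorem stmt_13 (T : ℕ) (σ : ℝ) (hσ : 0 < σ)
    (F : EuclideanSpace ℝ (Fin T) → ℝ → ℝ)
    (hmeas : Measurable (Function.uncurry F))
    (hmono : ∀ y, Monotone (F y))
    (hrc : ∀ y r, ContinuousWithinAt (F y) (Set.Ici r) r)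
    (hrange : ∀ y r, F y r ∈ Set.Icc (0:ℝ) 1)
    (hbot : ∀ y, Filter.Tendsto (F y) Filter.atBot (nhds 0))
    (htop : ∀ y, Filter.Tendsto (F y) Filter.atTop (nhds 1))
    (φ : ℝ → ℝ) (hφpos : ∀ r, 0 ≤ φ r) (hφint : IntegrableOn φ (Set.Ioi 0))
    (htail : ∀ y, ∀ r : ℝ, 0 < r → 1 - F y r ≤ φ r ∧ F y (-r) ≤ φ r)
    (x δ : EuclideanSpace ℝ (Fin T)) :
    ∫ r : ℝ, |(∫ z, F (x + z) r * gpdfs T σ z) - ∫ z, F (x + δ + z) r * gpdfs T σ z| ≤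
      (‖δ‖ / σ) * (∫ r in Set.Ioi (0:ℝ), φ r) * ∫ z, ‖z‖ * gpdf T z :=
  stmt_13_general T σ hσ F hmeas hrange φ hφint htail x δ
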